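/- arXiv:0709.3278 — 7 statements merged into one kernel-verified Lean document; each statement's English description precedes it below -/
import Mathlib

section
/- Let a and b be V-valued cocycles over φ that are cohomologous, i.e. there exists a continuous map h : E → V with a(t,x) + h(x) = h(t·x) + b(t,x) for all t ∈ 𝕋, x ∈ E. Then for every chain component M ⊆ E, the Morse spectra of M with respect to a and to b coincide: Λ_Mo^a(M) = Λ_Mo^b(M). -/
open Filter Topology

section

variable {E : Type*} [MetricSpace E] [CompactSpace E]
variable {V : Type*} [NormedAddCommGroup V] [NormedSpace ℝ V] [FiniteDimensional ℝ V]

/-- `a` is a continuous `V`-valued cocycle over the flow `φ`. -/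
def IsAddCocycle (φ : Flow ℝ E) (a : ℝ → E → V) : Prop :=
  Continuous (fun p : ℝ × E => a p.1 p.2) ∧
    ∀ t s x, a (t + s) x = a t (φ s x) + a s x

/-- `(N, x, t)` is an `(ε, T)`-chain of the flow `φ` from `p` to `q`:
points `x 0 = p, x 1, …, x N = q` and times `t 0, …, t (N-1)` with `t i ≥ T`
and `dist (φ (t i) (x i)) (x (i+1)) < ε`. -/
def IsFlowChain (φ : Flow ℝ E) (ε T : ℝ) (N : ℕ) (x : ℕ → E) (t : ℕ → ℝ) (p q : E) : Prop :=
  0 < N ∧ x 0 = p ∧ x N = q ∧ (∀ i < N, T ≤ t i) ∧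
    ∀ i < N, dist (φ (t i) (x i)) (x (i + 1)) < ε

/-- The finite-time Morse exponent of a chain:
`(1 / (t 0 + ⋯ + t (N-1))) • (a (t 0) (x 0) + ⋯ + a (t (N-1)) (x (N-1)))`. -/
noncomputable def chainExp (a : ℝ → E → V) (N : ℕ) (x : ℕ → E) (t : ℕ → ℝ) : V :=
  (∑ i ∈ Finset.range N, t i)⁻¹ • ∑ i ∈ Finset.range N, a (t i) (x i)

/-- The Morse spectrum of `M ⊆ E`: intersection over `ε, T > 0` of the closures
of the sets of finite-time Morse exponents of `(ε,T)`-chains belonging to `M`. -/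
noncomputable def morseSpec (φ : Flow ℝ E) (a : ℝ → E → V) (M : Set E) : Set V :=
  ⋂ (ε : ℝ) (_ : 0 < ε) (T : ℝ) (_ : 0 < T), closure
    {v | ∃ N x t, ∃ p ∈ M, ∃ q ∈ M, IsFlowChain φ ε T N x t p q ∧ v = chainExp a N x t}

/-- `M` is chain transitive: any two points of `M` are joined by `(ε,T)`-chains
for all `ε, T > 0`. -/
def IsChainTransitiveSet (φ : Flow ℝ E) (M : Set E) : Prop :=
  ∀ p ∈ M, ∀ q ∈ M, ∀ ε > (0:ℝ), ∀ T > (0:ℝ), ∃ N x t, IsFlowChain φ ε T N x t p q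

/-- A chain component is a maximal chain transitive subset. -/
def IsChainComponent (φ : Flow ℝ E) (M : Set E) : Prop :=
  IsChainTransitiveSet φ M ∧
    ∀ M' : Set E, IsChainTransitiveSet φ M' → M ⊆ M' → M = M'
lemma morseSpec_subset_of_coh (φ : Flow ℝ E) (a b : ℝ → E → V)
    (h : E → V) (hc : Continuous h)
    (hcoh : ∀ t x, a t x + h x = h (φ t x) + b t x)
    (M : Set E) : morseSpec φ a M ⊆ morseSpec φ b M := by
  -- bound for h
  obtain ⟨C, hC0, hCb⟩ : ∃ C > (0:ℝ), ∀ x, ‖h x‖ ≤ C := by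
    obtain ⟨C, hCb⟩ := (isCompact_range (hc.norm)).bddAbove
    refine ⟨max C 1, lt_of_lt_of_le one_pos (le_max_right _ _), fun x => ?_⟩
    exact le_trans (hCb ⟨x, rfl⟩) (le_max_left _ _)
  intro v hv
  simp only [morseSpec, Set.mem_iInter] at hv ⊢
  intro ε hε T hT
  rw [Metric.mem_closure_iff]
  intro η hη
  set T' : ℝ := max T (4 * C / η) + 1 with hT'def
  have hT'T : T ≤ T' := by
    have := le_max_left T (4 * C / η); rw [hT'def]; linarith
  have hT'C : 4 * C / η < T' := by
    have := le_max_right T (4 * C / η); rw [hT'def]; linarith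
  have hT'0 : 0 < T' := lt_of_lt_of_le hT (by linarith)
  have hvc := hv ε hε T' hT'0
  rw [Metric.mem_closure_iff] at hvc
  obtain ⟨w, hw, hdw⟩ := hvc (η / 2) (by linarith)
  obtain ⟨N, x, t, p, hp, q, hq, hchain, rfl⟩ := hw
  obtain ⟨hN, hx0, hxN, ht, hd⟩ := hchain
  refine ⟨chainExp b N x t, ⟨N, x, t, p, hp, q, hq,
    ⟨hN, hx0, hxN, fun i hi => le_trans hT'T (ht i hi), hd⟩, rfl⟩, ?_⟩
  -- estimate the distance between the two exponents
  have hNpos : (0:ℝ) < N := by exact_mod_cast hN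
  have hS : (N : ℝ) * T' ≤ ∑ i ∈ Finset.range N, t i := by
    calc (N : ℝ) * T' = ∑ _i ∈ Finset.range N, T' := by
          simp [Finset.sum_const, mul_comm]
      _ ≤ _ := Finset.sum_le_sum fun i hi => ht i (Finset.mem_range.mp hi)
  have hS0 : 0 < ∑ i ∈ Finset.range N, t i :=
    lt_of_lt_of_le (by positivity) hS
  have hsum : ‖∑ i ∈ Finset.range N, (a (t i) (x i) - b (t i) (x i))‖ ≤ N * (2 * C) := by
    calc ‖∑ i ∈ Finset.range N, (a (t i) (x i) - b (t i) (x i))‖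
        ≤ ∑ i ∈ Finset.range N, ‖a (t i) (x i) - b (t i) (x i)‖ := norm_sum_le _ _
      _ ≤ ∑ _i ∈ Finset.range N, (2 * C) := by
          refine Finset.sum_le_sum fun i _ => ?_
          have heq : a (t i) (x i) - b (t i) (x i) = h (φ (t i) (x i)) - h (x i) :=
            sub_eq_sub_iff_add_eq_add.mpr (hcoh (t i) (x i))
          rw [heq]
          exact (norm_sub_le _ _).trans (by linarith [hCb (φ (t i) (x i)), hCb (x i)])
      _ = N * (2 * C) := by simp [Finset.sum_const, mul_comm]
  have key : dist (chainExp a N x t) (chainExp b N x t) ≤ 2 * C / T' := by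
    rw [dist_eq_norm, chainExp, chainExp, ← smul_sub, ← Finset.sum_sub_distrib, norm_smul,
      Real.norm_eq_abs, abs_of_pos (inv_pos.mpr hS0)]
    calc (∑ i ∈ Finset.range N, t i)⁻¹ * ‖∑ i ∈ Finset.range N, (a (t i) (x i) - b (t i) (x i))‖
        ≤ ((N : ℝ) * T')⁻¹ * (N * (2 * C)) := by
          refine mul_le_mul ?_ hsum (norm_nonneg _) (by positivity)
          exact inv_anti₀ (by positivity) hS
      _ = 2 * C / T' := by field_simp
  have hlt : 2 * C / T' < η / 2 := by
    rw [div_lt_iff₀ hT'0]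
    have h1 : η / 2 * (4 * C / η) = 2 * C := by field_simp; ring
    nlinarith [mul_lt_mul_of_pos_left hT'C (show (0:ℝ) < η / 2 by linarith)]
  calc dist v (chainExp b N x t)
      ≤ dist v (chainExp a N x t) + dist (chainExp a N x t) (chainExp b N x t) :=
        dist_triangle _ _ _
    _ < η / 2 + η / 2 := add_lt_add_of_lt_of_le hdw (le_trans key (le_of_lt hlt))
    _ = η := by ring

/-- Cohomologous cocycles have the same Morse spectrum over every chain component. -/
theorem cohomologous_morse_eq (φ : Flow ℝ E) (a b : ℝ → E → V)
    (ha : IsAddCocycle φ a) (hb : IsAddCocycle φ b)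
    (h : E → V) (hc : Continuous h)
    (hcoh : ∀ t x, a t x + h x = h (φ t x) + b t x)
    (M : Set E) (hM : IsChainComponent φ M) :
    morseSpec φ a M = morseSpec φ b M := by
  refine Set.Subset.antisymm (morseSpec_subset_of_coh φ a b h hc hcoh M)
    (morseSpec_subset_of_coh φ b a (-h) hc.neg (fun t x => ?_) M)
  have hts := hcoh t x
  simp only [Pi.neg_apply, ← sub_eq_add_neg, neg_add_eq_sub]
  exact sub_eq_sub_iff_add_eq_add.mpr ((add_comm _ _).trans hts.symm)


end
end

section
/- Suppose 𝕋 = ℝ and let M ⊆ E be a chain component of the continuous-time flow φ. For any c > 0, the Morse spectrum of M for (φ, a) coincides with the Morse spectrum of M computed for the discretized flow, namely the discrete-time flow (n, x) ↦ (cn)·x (n ∈ ℤ) together with the restricted cocycle a restricted to cℤ × E, where in the discretized Morse spectrum the chains are required to have all times t_i in c·ℤ with t_i ≥ T. -/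
/-! Discrete chains are in particular chains, which gives one inclusion. Conversely, push the
`n`-th point of a chain with long times forward along the flow by `σₙ ∈ [0, c]`, the amount
that rounds the cumulative time `t₀ + ⋯ + tₙ₋₁` up to a multiple of `c`. The new times are
differences of multiples of `c`; the jumps stay small by uniform continuity of the flow over
times in `[0, c]`; the end point stays in `M` since chain components are forward invariant; and
by the cocycle identity each summand of the exponent changes by a bounded amount, so the two
exponents differ by `O(1 / T)`. -/

open Filter Topology

section

variable {E : Type*} [MetricSpace E] [CompactSpace E]
variable {V : Type*} [NormedAddCommGroup V] [NormedSpace ℝ V] [FiniteDimensional ℝ V]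

/-- The Morse spectrum of `M` computed with chains of the discretized flow
`(n, x) ↦ (c * n) • x`, i.e. with all chain times lying in `c • ℤ`. -/
noncomputable def morseSpecDisc (φ : Flow ℝ E) (a : ℝ → E → V) (c : ℝ) (M : Set E) : Set V :=
  ⋂ (ε : ℝ) (_ : 0 < ε) (T : ℝ) (_ : 0 < T), closure
    {v | ∃ N x t, ∃ p ∈ M, ∃ q ∈ M, IsFlowChain φ ε T N x t p q ∧
      (∀ i < N, ∃ n : ℤ, t i = c * n) ∧ v = chainExp a N x t}

open Set

theorem Flow.exists_pos_forall_mem_Icc_dist_lt {E : Type*} [MetricSpace E] [CompactSpace E]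
    (φ : Flow ℝ E) (b : ℝ) {ε : ℝ} (hε : 0 < ε) :
    ∃ δ > 0, ∀ s ∈ Icc 0 b, ∀ y z : E, dist y z < δ → dist (φ s y) (φ s z) < ε := by
  have : CompactSpace (Icc (0 : ℝ) b) := isCompact_iff_compactSpace.mp isCompact_Icc
  have hu : UniformContinuous fun p : Icc (0 : ℝ) b × E => φ p.1 p.2 :=
    CompactSpace.uniformContinuous_of_continuous
      (φ.continuous (continuous_subtype_val.comp continuous_fst) continuous_snd)
  obtain ⟨δ, hδ, h⟩ := Metric.uniformContinuous_iff.mp hu ε hε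
  refine ⟨δ, hδ, fun s hs y z hyz => h (a := (⟨s, hs⟩, y)) (b := (⟨s, hs⟩, z)) ?_⟩
  simpa [Prod.dist_eq] using hyz

theorem IsFlowChain.mono {E : Type*} [MetricSpace E] {φ : Flow ℝ E} {ε ε' T T' : ℝ} {N : ℕ}
    {x : ℕ → E} {t : ℕ → ℝ} {p q : E} (h : IsFlowChain φ ε T N x t p q) (hε : ε ≤ ε')
    (hT : T' ≤ T) : IsFlowChain φ ε' T' N x t p q :=
  ⟨h.1, h.2.1, h.2.2.1, fun i hi => hT.trans (h.2.2.2.1 i hi),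
    fun i hi => (h.2.2.2.2 i hi).trans_le hε⟩

theorem IsFlowChain.shift {E : Type*} [MetricSpace E] {φ : Flow ℝ E} {δ ε T c : ℝ} {N : ℕ}
    {x : ℕ → E} {t : ℕ → ℝ} {p q : E} (h : IsFlowChain φ δ T N x t p q)
    (hδ : ∀ s ∈ Icc 0 c, ∀ y z : E, dist y z < δ → dist (φ s y) (φ s z) < ε)
    {σ : ℕ → ℝ} (hσ : ∀ i, σ i ∈ Icc 0 c) :
    IsFlowChain φ ε (T - c) N (fun i => φ (σ i) (x i)) (fun i => t i + σ (i + 1) - σ i)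
      (φ (σ 0) p) (φ (σ N) q) := by
  obtain ⟨hN, hx0, hxN, ht, hjump⟩ := h
  refine ⟨hN, congrArg (φ (σ 0)) hx0, congrArg (φ (σ N)) hxN, fun i hi => ?_, fun i hi => ?_⟩
  · linarith [ht i hi, (hσ (i + 1)).1, (hσ i).2]
  · have hflow : φ (t i + σ (i + 1) - σ i) (φ (σ i) (x i)) = φ (σ (i + 1)) (φ (t i) (x i)) := by
      rw [← φ.map_add, ← φ.map_add]; ring_nf
    simpa only [hflow] using hδ _ (hσ _) _ _ (hjump i hi)

theorem IsChainComponent.isForwardInvariant {E : Type*} [MetricSpace E] [CompactSpace E]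
    {φ : Flow ℝ E} {M : Set E} (hM : IsChainComponent φ M) : IsForwardInvariant φ M := by
  intro s hs q hq
  have hrep : ∀ u ∈ M ∪ φ s '' M, ∃ s' ∈ Icc 0 s, ∃ m ∈ M, φ s' m = u := by
    rintro u (hu | ⟨m, hm, rfl⟩)
    · exact ⟨0, ⟨le_rfl, hs⟩, u, hu, φ.map_zero_apply u⟩
    · exact ⟨s, ⟨hs, le_rfl⟩, m, hm, rfl⟩
  have htrans : IsChainTransitiveSet φ (M ∪ φ s '' M) := by
    intro u hu w hw ε hε T hT
    obtain ⟨s₁, hs₁, p, hp, rfl⟩ := hrep u hu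
    obtain ⟨s₂, hs₂, q, hq, rfl⟩ := hrep w hw
    obtain ⟨δ, hδ, hδε⟩ := φ.exists_pos_forall_mem_Icc_dist_lt s hε
    obtain ⟨N, x, t, h⟩ := hM.1 p hp q hq δ hδ (T + s) (by linarith)
    let σ : ℕ → ℝ := fun i => if i = 0 then s₁ else s₂
    have hσ : ∀ i, σ i ∈ Icc 0 s := fun i => by dsimp only [σ]; split_ifs <;> assumption
    have hσN : σ N = s₂ := if_neg h.1.ne'
    have h' := (h.shift hδε hσ).mono le_rfl (T' := T) (by linarith)
    rw [hσN] at h'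
    exact ⟨N, _, _, h'⟩
  rw [hM.2 _ htrans subset_union_left]
  exact Or.inr ⟨q, hq, rfl⟩

theorem IsAddCocycle.exists_norm_le {E : Type*} [MetricSpace E] [CompactSpace E]
    {V : Type*} [NormedAddCommGroup V] {φ : Flow ℝ E} {a : ℝ → E → V} (ha : IsAddCocycle φ a) :
    ∃ C, 0 ≤ C ∧ ∀ t, 0 ≤ t → ∀ x, ‖a t x‖ ≤ C * (t + 1) := by
  obtain ⟨K, hK⟩ := (isCompact_Icc (a := (0 : ℝ)) (b := 1)).prod isCompact_univ
    |>.exists_bound_of_continuousOn (ha.1.continuousOn (s := Icc 0 1 ×ˢ univ))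
  have hK1 : ∀ t ∈ Icc (0 : ℝ) 1, ∀ x, ‖a t x‖ ≤ max K 0 := fun t ht x =>
    (hK (t, x) ⟨ht, mem_univ x⟩).trans (le_max_left _ _)
  have hstep : ∀ n : ℕ, ∀ t ∈ Icc (0 : ℝ) (n + 1), ∀ x, ‖a t x‖ ≤ max K 0 * (n + 1) := by
    intro n
    induction n with
    | zero => simpa using hK1
    | succ n ih =>
      intro t ⟨ht0, htn⟩ x
      have hsplit : a t x = a (t - min t 1) (φ (min t 1) x) + a (min t 1) x := by
        rw [← ha.2, sub_add_cancel]
      rw [hsplit]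
      refine (norm_add_le _ _).trans ?_
      have h1 := ih (t - min t 1) ⟨by simp, by push_cast at htn; grind⟩ (φ (min t 1) x)
      have h2 := hK1 (min t 1) ⟨le_min ht0 zero_le_one, min_le_right _ _⟩ x
      push_cast
      linarith
  refine ⟨max K 0, le_max_right _ _, fun t ht x => ?_⟩
  calc ‖a t x‖ ≤ max K 0 * (⌊t⌋₊ + 1) :=
        hstep _ t ⟨ht, (Nat.lt_floor_add_one t).le⟩ x
    _ ≤ max K 0 * (t + 1) := by gcongr; exact Nat.floor_le ht

theorem IsAddCocycle.apply_shift_sub {E : Type*} [MetricSpace E] {V : Type*}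
    [NormedAddCommGroup V] {φ : Flow ℝ E} {a : ℝ → E → V} (ha : IsAddCocycle φ a)
    (t s s' : ℝ) (x : E) : a (t + s' - s) (φ s x) - a t x = a s' (φ t x) - a s x := by
  have h := ha.2 (t + s' - s) s x
  rw [show t + s' - s + s = s' + t by ring, ha.2 s' t x] at h
  rw [eq_sub_of_add_eq h.symm]
  abel

theorem norm_inv_smul_sub_inv_smul_le {V : Type*} [SeminormedAddCommGroup V] [NormedSpace ℝ V]
    {S S' : ℝ} (hS : 0 < S) (hSS' : S ≤ S') (A A' : V) :
    ‖S⁻¹ • A - S'⁻¹ • A'‖ ≤ ‖A - A'‖ / S' + (S' - S) * ‖A‖ / (S * S') := by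
  have hS' : 0 < S' := hS.trans_le hSS'
  have hdecomp : S⁻¹ • A - S'⁻¹ • A' = S'⁻¹ • (A - A') + ((S' - S) / (S * S')) • A := by
    rw [show (S' - S) / (S * S') = S⁻¹ - S'⁻¹ by field_simp, smul_sub, sub_smul]
    abel
  rw [hdecomp]
  refine (norm_add_le _ _).trans_eq ?_
  rw [norm_smul, norm_smul, Real.norm_of_nonneg (by positivity),
    Real.norm_of_nonneg (div_nonneg (sub_nonneg.2 hSS') (by positivity))]
  ring

theorem dist_chainExp_shift_le {E : Type*} [MetricSpace E] {V : Type*} [NormedAddCommGroup V]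
    [NormedSpace ℝ V] {φ : Flow ℝ E} {a : ℝ → E → V} (ha : IsAddCocycle φ a) {C : ℝ}
    (hC : ∀ t, 0 ≤ t → ∀ x, ‖a t x‖ ≤ C * (t + 1)) {c T : ℝ} (hT : 1 ≤ T) {N : ℕ}
    (hN : 0 < N) {t : ℕ → ℝ} (ht : ∀ i < N, T ≤ t i) {σ : ℕ → ℝ} (hσ0 : σ 0 = 0)
    (hσ : ∀ i, σ i ∈ Icc 0 c) (x : ℕ → E) :
    dist (chainExp a N x t)
        (chainExp a N (fun i => φ (σ i) (x i)) (fun i => t i + σ (i + 1) - σ i)) ≤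
      4 * C * (c + 1) / T := by
  set S := ∑ i ∈ Finset.range N, t i
  set A := ∑ i ∈ Finset.range N, a (t i) (x i)
  set A' := ∑ i ∈ Finset.range N, a (t i + σ (i + 1) - σ i) (φ (σ i) (x i))
  have hC0 : 0 ≤ C := by
    have := (norm_nonneg _).trans (hC 0 le_rfl (x 0))
    linarith
  have hS' : ∑ i ∈ Finset.range N, (t i + σ (i + 1) - σ i) = S + σ N := by
    simp only [add_sub_assoc, Finset.sum_add_distrib, Finset.sum_range_sub, hσ0, sub_zero, S]
  have hNS : N * T ≤ S := by
    simpa using Finset.card_nsmul_le_sum (Finset.range N) t T fun i hi =>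
      ht i (Finset.mem_range.1 hi)
  have hTS : T ≤ S := by
    have : (1 : ℝ) ≤ N := by exact_mod_cast hN
    nlinarith
  have hA : ‖A‖ ≤ 2 * C * S := by
    refine (norm_sum_le _ _).trans ?_
    rw [Finset.mul_sum]
    refine Finset.sum_le_sum fun i hi => ?_
    have hti := ht i (Finset.mem_range.1 hi)
    have := hC (t i) (by linarith) (x i)
    nlinarith
  have hterm : ∀ i, ‖a (t i) (x i) - a (t i + σ (i + 1) - σ i) (φ (σ i) (x i))‖ ≤
      2 * C * (c + 1) := fun i => by
    rw [← norm_neg, neg_sub, ha.apply_shift_sub]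
    refine (norm_sub_le _ _).trans ?_
    have h1 := hC (σ (i + 1)) (hσ _).1 (φ (t i) (x i))
    have h2 := hC (σ i) (hσ _).1 (x i)
    nlinarith [(hσ (i + 1)).2, (hσ i).2]
  have hAA' : ‖A - A'‖ ≤ N * (2 * C * (c + 1)) := by
    rw [← Finset.sum_sub_distrib]
    refine (norm_sum_le _ _).trans ?_
    simpa using Finset.sum_le_card_nsmul (Finset.range N) _ _ fun i _ => hterm i
  obtain ⟨hσN0, hσNc⟩ := hσ N
  have hc : 0 ≤ c := hσN0.trans hσNc
  have hT0 : 0 < T := by linarith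
  have hS0 : 0 < S := by linarith
  have hdiff : ‖A - A'‖ / (S + σ N) ≤ 2 * C * (c + 1) / T := by
    have hD : 0 ≤ 2 * C * (c + 1) := by positivity
    rw [div_le_div_iff₀ (by linarith) hT0]
    calc ‖A - A'‖ * T ≤ N * (2 * C * (c + 1)) * T := by gcongr
      _ ≤ 2 * C * (c + 1) * (S + σ N) := by nlinarith
  have hscale : (S + σ N - S) * ‖A‖ / (S * (S + σ N)) ≤ 2 * C * c / T := by
    calc (S + σ N - S) * ‖A‖ / (S * (S + σ N)) ≤ c * (2 * C * S) / (S * T) := by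
          gcongr <;> linarith
      _ = 2 * C * c / T := by field_simp
  calc dist (chainExp a N x t) _ = ‖S⁻¹ • A - (S + σ N)⁻¹ • A'‖ := by
        rw [dist_eq_norm, chainExp, chainExp, hS']
    _ ≤ ‖A - A'‖ / (S + σ N) + (S + σ N - S) * ‖A‖ / (S * (S + σ N)) :=
        norm_inv_smul_sub_inv_smul_le hS0 (by linarith) A A'
    _ ≤ 2 * C * (c + 1) / T + 2 * C * c / T := add_le_add hdiff hscale
    _ ≤ 4 * C * (c + 1) / T := by
        rw [← add_div]
        gcongr
        nlinarith

theorem mul_ceil_div_sub_mem_Icc {c : ℝ} (hc : 0 < c) (y : ℝ) : c * ⌈y / c⌉ - y ∈ Icc 0 c := by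
  have hy : c * (y / c) = y := mul_div_cancel₀ y hc.ne'
  constructor <;> nlinarith [Int.le_ceil (y / c), Int.ceil_lt_add_one (y / c)]

theorem IsForwardInvariant.exists_discrete_chain_near {E : Type*} [MetricSpace E]
    [CompactSpace E] {V : Type*} [NormedAddCommGroup V] [NormedSpace ℝ V] {φ : Flow ℝ E}
    {a : ℝ → E → V} (ha : IsAddCocycle φ a) {M : Set E} (hM : IsForwardInvariant φ M)
    {c ε r : ℝ} (hc : 0 < c) (hε : 0 < ε) (hr : 0 < r) (T : ℝ) :
    ∃ δ > 0, ∃ T₁ > 0, ∀ N x t p q, q ∈ M → IsFlowChain φ δ T₁ N x t p q →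
      ∃ x' t', ∃ q' ∈ M, IsFlowChain φ ε T N x' t' p q' ∧ (∀ i < N, ∃ n : ℤ, t' i = c * n) ∧
        dist (chainExp a N x t) (chainExp a N x' t') ≤ r := by
  obtain ⟨δ, hδ, hδε⟩ := φ.exists_pos_forall_mem_Icc_dist_lt c hε
  obtain ⟨C, hC0, hC⟩ := ha.exists_norm_le
  set T₁ := max (T + c) 1 + 4 * C * (c + 1) / r
  have hL : 0 ≤ 4 * C * (c + 1) / r := by positivity
  have hT₁ : 1 ≤ T₁ := by linarith [le_max_right (T + c) 1]
  refine ⟨δ, hδ, T₁, by linarith, fun N x t p q hq h => ?_⟩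
  let σ : ℕ → ℝ := fun n =>
    c * ⌈(∑ i ∈ Finset.range n, t i) / c⌉ - ∑ i ∈ Finset.range n, t i
  have hσ : ∀ n, σ n ∈ Icc 0 c := fun n => mul_ceil_div_sub_mem_Icc hc _
  have hσ0 : σ 0 = 0 := by simp [σ]
  have hchain := h.shift hδε hσ
  rw [hσ0, φ.map_zero_apply] at hchain
  refine ⟨_, _, _, hM (hσ N).1 hq, hchain.mono le_rfl ?_, fun i _ => ?_, ?_⟩
  · linarith [le_max_left (T + c) 1]
  · refine ⟨⌈(∑ j ∈ Finset.range (i + 1), t j) / c⌉ - ⌈(∑ j ∈ Finset.range i, t j) / c⌉, ?_⟩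
    simp only [σ, Finset.sum_range_succ]
    push_cast
    ring
  · refine (dist_chainExp_shift_le ha hC hT₁ h.1 h.2.2.2.1 hσ0 hσ x).trans ?_
    rw [div_le_iff₀ (by linarith)]
    have : 4 * C * (c + 1) ≤ r * (4 * C * (c + 1) / r) := by rw [mul_div_cancel₀ _ hr.ne']
    nlinarith [le_max_right (T + c) 1]

theorem morseSpec_subset_morseSpecDisc {E : Type*} [MetricSpace E] [CompactSpace E]
    {V : Type*} [NormedAddCommGroup V] [NormedSpace ℝ V] {φ : Flow ℝ E} {a : ℝ → E → V}
    (ha : IsAddCocycle φ a) {M : Set E} (hM : IsForwardInvariant φ M) {c : ℝ} (hc : 0 < c) :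
    morseSpec φ a M ⊆ morseSpecDisc φ a c M := by
  intro v hv
  simp only [morseSpec, morseSpecDisc, mem_iInter] at hv ⊢
  intro ε hε T _
  refine Metric.mem_closure_iff.2 fun r hr => ?_
  obtain ⟨δ, hδ, T₁, hT₁, hdisc⟩ := hM.exists_discrete_chain_near ha hc hε (half_pos hr) T
  obtain ⟨_, ⟨N, x, t, p, hp, q, hq, h, rfl⟩, hvw⟩ :=
    Metric.mem_closure_iff.1 (hv δ hδ T₁ hT₁) (r / 2) (half_pos hr)
  obtain ⟨x', t', q', hq', h', ht', hdist⟩ := hdisc N x t p q hq h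
  refine ⟨_, ⟨N, x', t', p, hp, q', hq', h', ht', rfl⟩, ?_⟩
  linarith [dist_triangle v (chainExp a N x t) (chainExp a N x' t')]

theorem morseSpecDisc_subset_morseSpec {E : Type*} [MetricSpace E] {V : Type*}
    [NormedAddCommGroup V] [NormedSpace ℝ V] (φ : Flow ℝ E) (a : ℝ → E → V) (c : ℝ)
    (M : Set E) : morseSpecDisc φ a c M ⊆ morseSpec φ a M :=
  iInter₂_mono fun _ _ => iInter₂_mono fun _ _ => closure_mono
    fun _ ⟨N, x, t, p, hp, q, hq, h, _, hv⟩ => ⟨N, x, t, p, hp, q, hq, h, hv⟩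

/-- The Morse spectrum of a chain component of a continuous-time flow coincides
with the Morse spectrum computed for any of its discretizations (restriction of
the flow and of the cocycle to `c • ℤ`, `c > 0`). -/
theorem morseSpec_eq_morseSpecDisc (φ : Flow ℝ E) (a : ℝ → E → V)
    (ha : IsAddCocycle φ a) (M : Set E) (hM : IsChainComponent φ M)
    (c : ℝ) (hc : 0 < c) :
    morseSpec φ a M = morseSpecDisc φ a c M :=
  (morseSpec_subset_morseSpecDisc ha hM.isForwardInvariant hc).antisymm
    (morseSpecDisc_subset_morseSpec φ a c M)

end
end

section
/- Let M ⊆ E be a chain component of φ and suppose that for some x ∈ E the ω-limit set ω(x) is contained in M and the Lyapunov exponent λ(x) exists. Then λ(x) ∈ Λ_Mo(M). -/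
open Filter Topology

section

variable {E : Type*} [MetricSpace E] [CompactSpace E]
variable {V : Type*} [NormedAddCommGroup V] [NormedSpace ℝ V] [FiniteDimensional ℝ V]

/-- The Lyapunov exponent of the cocycle `a` at `x` exists and equals `l`,
i.e. `(1/T) • a T x → l` as `T → +∞`. -/
def HasLyapExp (a : ℝ → E → V) (x : E) (l : V) : Prop :=
  Tendsto (fun T : ℝ => T⁻¹ • a T x) atTop (𝓝 l)

/-- The Lyapunov spectrum of a subset `Y ⊆ E`. -/
def lyapSpec (a : ℝ → E → V) (Y : Set E) : Set V :=
  {l | ∃ x ∈ Y, HasLyapExp a x l}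

end

/-! Pick `y ∈ ω(x)`, which is nonempty by compactness. An `(ε, T)`-chain from `y` to `y` is
obtained by jumping from `y` onto the orbit of `x` at a time `s₁` when the orbit is close to `y`,
and following the orbit up to a much later time `s₂` when it is again close to `y`. By the
cocycle identity its Morse exponent is `(s₂ - s₁)⁻¹ • (c + a s₂ x)` with `c` independent of `s₂`,
which tends to `λ(x)` as `s₂ → ∞`. -/

theorem mem_iInter_closure_of_mapClusterPt {ι X : Type*} [Preorder ι] [IsDirectedOrder ι]
    [Nonempty ι] [TopologicalSpace X] {u : ι → X} {y : X} (hy : MapClusterPt y atTop u) :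
    y ∈ ⋂ s : ι, closure {z : X | ∃ t ≥ s, z = u t} := by
  rw [mapClusterPt_atTop_iff_forall_mem_closure] at hy
  refine Set.mem_iInter.mpr fun s => ?_
  convert hy s using 2
  ext z
  simp [eq_comm]

theorem tendsto_inv_sub_smul_const_add {V : Type*} [NormedAddCommGroup V] [NormedSpace ℝ V]
    {f : ℝ → V} {l : V} (hf : Tendsto (fun s => s⁻¹ • f s) atTop (𝓝 l)) (s₀ : ℝ) (c : V) :
    Tendsto (fun s => (s - s₀)⁻¹ • (c + f s)) atTop (𝓝 l) := by
  have h₀ : Tendsto (fun s : ℝ => (s - s₀)⁻¹) atTop (𝓝 0) :=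
    tendsto_inv_atTop_zero.comp (tendsto_atTop_add_const_right _ _ tendsto_id)
  have hlim := (h₀.smul_const c).add (hf.add ((h₀.const_mul s₀).smul hf))
  rw [zero_smul, mul_zero, zero_smul, add_zero, zero_add] at hlim
  refine hlim.congr' ?_
  filter_upwards [eventually_gt_atTop (max s₀ 0)] with s hs
  have hs₀ : s - s₀ ≠ 0 := sub_ne_zero.mpr (lt_of_le_of_lt (le_max_left _ _) hs).ne'
  have hs : s ≠ 0 := (lt_of_le_of_lt (le_max_right _ _) hs).ne'
  -- `(s - s₀)⁻¹ = s⁻¹ * (1 + s₀ * (s - s₀)⁻¹)`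
  rw [smul_smul, ← add_smul, smul_add]
  congr 2
  field_simp
  ring

theorem isFlowChain_two {E : Type*} [MetricSpace E] {φ : Flow ℝ E} {ε T t₀ t₁ : ℝ} {p q r : E}
    (h₀ : T ≤ t₀) (h₁ : T ≤ t₁) (hpq : dist (φ t₀ p) q < ε) (hqr : dist (φ t₁ q) r < ε) :
    IsFlowChain φ ε T 2 (fun i => if i = 0 then p else if i = 1 then q else r)
      (fun i => if i = 0 then t₀ else t₁) p r := by
  refine ⟨two_pos, rfl, rfl, fun i hi => ?_, fun i hi => ?_⟩ <;> interval_cases i <;> simpa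

theorem chainExp_two {E V : Type*} [NormedAddCommGroup V] [NormedSpace ℝ V] (a : ℝ → E → V)
    (p q r : E) (t₀ t₁ : ℝ) :
    chainExp a 2 (fun i => if i = 0 then p else if i = 1 then q else r)
      (fun i => if i = 0 then t₀ else t₁) = (t₀ + t₁)⁻¹ • (a t₀ p + a t₁ q) := by
  simp [chainExp, Finset.sum_range_succ]

theorem HasLyapExp.mem_closure_chainExp_of_mapClusterPt {E V : Type*} [MetricSpace E]
    [NormedAddCommGroup V] [NormedSpace ℝ V] {φ : Flow ℝ E} {a : ℝ → E → V}
    (ha : ∀ t s x, a (t + s) x = a t (φ s x) + a s x) {x y : E} {l : V} (hl : HasLyapExp a x l)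
    (hy : MapClusterPt y atTop (φ · x)) {ε : ℝ} (hε : 0 < ε) (T : ℝ) :
    l ∈ closure {v | ∃ N xs ts, IsFlowChain φ ε T N xs ts y y ∧ v = chainExp a N xs ts} := by
  rw [Metric.mem_closure_iff]
  intro δ hδ
  obtain ⟨η, hη, hφT⟩ := Metric.continuous_iff.mp (φ.continuous_toFun T) y ε hε
  obtain ⟨s₁, hs₁⟩ := (hy.frequently (Metric.ball_mem_nhds y hη)).exists
  have hlim := tendsto_inv_sub_smul_const_add hl s₁ (a T y - a (T + s₁) x)
  obtain ⟨s₂, hs₂_near, hs₂_exp, hs₂_ge⟩ :=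
    ((hy.frequently (Metric.ball_mem_nhds y hε)).and_eventually
      ((Metric.tendsto_nhds.mp hlim δ hδ).and (eventually_ge_atTop (s₁ + 2 * T)))).exists
  have hjump : dist (φ T y) (φ (T + s₁) x) < ε := by
    rw [φ.map_add, dist_comm]
    exact hφT _ hs₁
  have hreturn : dist (φ (s₂ - s₁ - T) (φ (T + s₁) x)) y < ε := by
    rwa [← φ.map_add, sub_sub, add_comm s₁, sub_add_cancel]
  refine ⟨_, ⟨2, _, _, isFlowChain_two le_rfl (by linarith) hjump hreturn, rfl⟩, ?_⟩
  have hcocycle : a (s₂ - s₁ - T) (φ (T + s₁) x) = a s₂ x - a (T + s₁) x := by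
    rw [eq_sub_iff_add_eq, ← ha, sub_sub, add_comm s₁, sub_add_cancel]
  rw [sub_add_eq_add_sub, add_sub_assoc] at hs₂_exp
  rw [chainExp_two, hcocycle, dist_comm, add_sub_cancel]
  exact hs₂_exp

section

variable {E : Type*} [MetricSpace E] [CompactSpace E]
variable {V : Type*} [NormedAddCommGroup V] [NormedSpace ℝ V] [FiniteDimensional ℝ V]

theorem lyapExp_mem_morseSpec_of_omegaLimit_subset_general (φ : Flow ℝ E) (a : ℝ → E → V)
    (ha : IsAddCocycle φ a) (M : Set E)
    (x : E) (hω : (⋂ s : ℝ, closure {y : E | ∃ t ≥ s, y = φ t x}) ⊆ M)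
    (l : V) (hl : HasLyapExp a x l) :
    l ∈ morseSpec φ a M := by
  obtain ⟨y, hy⟩ := exists_clusterPt_of_compactSpace (map (φ · x) atTop)
  have hyM : y ∈ M := hω (mem_iInter_closure_of_mapClusterPt hy)
  simp only [morseSpec, Set.mem_iInter]
  intro ε hε T _
  refine closure_mono ?_ (hl.mem_closure_chainExp_of_mapClusterPt ha.2 hy hε T)
  rintro v ⟨N, xs, ts, hchain, rfl⟩
  exact ⟨N, xs, ts, y, hyM, y, hyM, hchain, rfl⟩

/-- If the ω-limit set of `x` is contained in the chain component `M` and the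
Lyapunov exponent of `a` at `x` exists, then it belongs to the Morse spectrum of `M`. -/
theorem lyapExp_mem_morseSpec_of_omegaLimit_subset (φ : Flow ℝ E) (a : ℝ → E → V)
    (ha : IsAddCocycle φ a) (M : Set E) (hM : IsChainComponent φ M)
    (x : E) (hω : (⋂ s : ℝ, closure {y : E | ∃ t ≥ s, y = φ t x}) ⊆ M)
    (l : V) (hl : HasLyapExp a x l) :
    l ∈ morseSpec φ a M :=
  lyapExp_mem_morseSpec_of_omegaLimit_subset_general φ a ha M x hω l hl

end
end

section
/- Suppose φ has only finitely many chain components M₁, …, M_n (so that they form the finest Morse decomposition of φ on E). Then the Lyapunov spectrum of the whole space is contained in the union of the Morse spectra of the chain components: Λ_Ly(E) ⊆ Λ_Mo(M₁) ∪ ⋯ ∪ Λ_Mo(M_n). -/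
/-!
Let `l` be the Lyapunov exponent at `x` and `p` an ω-limit point of `x`, which exists by
compactness. A loop at `p` is obtained by flowing from `p` for time `T`, jumping to `φ (S + T) x`
where `φ S x` is close to `p`, and riding the orbit of `x` up to a much later time `S'` at which
it is close to `p` again. By the cocycle identity the Morse exponent of this loop differs from
`(S' - S)⁻¹ • a S' x` by `O(1 / (S' - S))`, so it tends to `l` as `S' → ∞`. In particular `{p}`
is chain transitive, so `p` lies in a chain component, which must be some `M i`, and the loops
put `l` into the Morse spectrum of `M i`.
-/

open Filter Topology

section

variable {E V : Type*} [NormedAddCommGroup V]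

theorem tendsto_inv_sub_smul_add_const [NormedSpace ℝ V] {f : ℝ → V} {l : V} (S : ℝ) (c : V)
    (hf : Tendsto (fun t : ℝ => t⁻¹ • f t) atTop (𝓝 l)) :
    Tendsto (fun t : ℝ => (t - S)⁻¹ • (f t + c)) atTop (𝓝 l) := by
  have hinv : Tendsto (fun t : ℝ => (t - S)⁻¹) atTop (𝓝 0) :=
    tendsto_inv_atTop_zero.comp (tendsto_atTop_add_const_right atTop (-S) tendsto_id)
  have hratio : Tendsto (fun t : ℝ => 1 + S * (t - S)⁻¹) atTop (𝓝 1) := by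
    simpa using (hinv.const_mul S).const_add 1
  have hsum := (hratio.smul hf).add (hinv.smul_const c)
  rw [one_smul, zero_smul, add_zero] at hsum
  refine hsum.congr' ?_
  filter_upwards [eventually_gt_atTop (max S 0)] with t ht
  have ht₀ : t ≠ 0 := (lt_of_le_of_lt (le_max_right S 0) ht).ne'
  have htS : t - S ≠ 0 := sub_ne_zero.2 (lt_of_le_of_lt (le_max_left S 0) ht).ne'
  have hcoef : (1 + S * (t - S)⁻¹) * t⁻¹ = (t - S)⁻¹ := by
    field_simp
    ring
  rw [smul_smul, hcoef, smul_add]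

theorem IsAddCocycle.apply_flow_eq_sub [MetricSpace E] {φ : Flow ℝ E} {a : ℝ → E → V}
    (ha : IsAddCocycle φ a) (t s : ℝ) (x : E) : a (t - s) (φ s x) = a t x - a s x := by
  rw [eq_sub_iff_add_eq, ← ha.2, sub_add_cancel]

theorem chainExp_two_s7 [NormedSpace ℝ V] (a : ℝ → E → V) (x : ℕ → E) (t : ℕ → ℝ) :
    chainExp a 2 x t = (t 0 + t 1)⁻¹ • (a (t 0) (x 0) + a (t 1) (x 1)) := by
  simp only [chainExp, Finset.sum_range_succ, Finset.sum_range_zero, zero_add]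

theorem isFlowChain_two_loop [MetricSpace E] {φ : Flow ℝ E} {ε T t₀ t₁ : ℝ} {p y : E}
    (h₀ : T ≤ t₀) (h₁ : T ≤ t₁) (hy : dist (φ t₀ p) y < ε) (hp : dist (φ t₁ y) p < ε) :
    IsFlowChain φ ε T 2 (fun i => if i = 1 then y else p)
      (fun i => if i = 0 then t₀ else t₁) p p := by
  refine ⟨two_pos, rfl, rfl, fun i hi => ?_, fun i hi => ?_⟩ <;>
    interval_cases i <;> simpa

theorem exists_flowChain_loop_chainExp_near [MetricSpace E] [NormedSpace ℝ V]
    {φ : Flow ℝ E} {a : ℝ → E → V} (ha : IsAddCocycle φ a) {x p : E} {l : V} (hx : HasLyapExp a x l)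
    (hp : MapClusterPt p atTop (fun t : ℝ => φ t x)) {ε η : ℝ} (hε : 0 < ε) (hη : 0 < η)
    (T : ℝ) : ∃ N xs ts, IsFlowChain φ ε T N xs ts p p ∧ dist (chainExp a N xs ts) l < η := by
  obtain ⟨δ, hδ, hφT⟩ := Metric.continuousAt_iff.mp
    ((φ.continuous_toFun T).continuousAt (x := p)) ε hε
  obtain ⟨S, hS⟩ := (hp.frequently (Metric.ball_mem_nhds p hδ)).exists
  have hlim := tendsto_inv_sub_smul_add_const S (a T p - a (S + T) x) hx
  obtain ⟨S', hS'p, hS'l, hS'S⟩ := ((hp.frequently (Metric.ball_mem_nhds p hε)).and_eventually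
    ((Metric.tendsto_nhds.mp hlim η hη).and (eventually_ge_atTop (S + 2 * T)))).exists
  refine ⟨2, _, _, isFlowChain_two_loop (le_refl T) (by linarith : T ≤ S' - (S + T))
    (y := φ (S + T) x) ?_ ?_, ?_⟩
  · rw [add_comm, φ.map_add, dist_comm]
    exact hφT hS
  · rwa [← φ.map_add, sub_add_cancel]
  · rw [chainExp_two_s7]
    simp only [↓reduceIte, one_ne_zero, ha.apply_flow_eq_sub]
    convert hS'l using 3
    · ring
    · exact add_sub_left_comm _ _ _

theorem isChainTransitiveSet_sUnion [MetricSpace E] {φ : Flow ℝ E} {c : Set (Set E)}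
    (hc : IsChain (· ⊆ ·) c) (hcT : ∀ M ∈ c, IsChainTransitiveSet φ M) :
    IsChainTransitiveSet φ (⋃₀ c) := by
  rintro p ⟨M, hM, hpM⟩ q ⟨M', hM', hqM'⟩
  rcases hc.total hM hM' with h | h
  · exact hcT M' hM' p (h hpM) q hqM'
  · exact hcT M hM p hpM q (h hqM')

theorem IsChainTransitiveSet.exists_isChainComponent_superset [MetricSpace E]
    {φ : Flow ℝ E} {M : Set E} (hM : IsChainTransitiveSet φ M) :
    ∃ M', IsChainComponent φ M' ∧ M ⊆ M' := by
  obtain ⟨M', hMM', hmax⟩ := zorn_subset_nonempty {M | IsChainTransitiveSet φ M}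
    (fun c hcT hc _ => ⟨⋃₀ c, isChainTransitiveSet_sUnion hc hcT,
      fun _ => Set.subset_sUnion_of_mem⟩) M hM
  exact ⟨M', ⟨hmax.prop, fun _ hM'' hsub => subset_antisymm hsub (hmax.le_of_ge hM'' hsub)⟩, hMM'⟩

theorem isChainTransitiveSet_singleton [MetricSpace E] {φ : Flow ℝ E} {p : E}
    (h : ∀ ε > (0:ℝ), ∀ T > (0:ℝ), ∃ N x t, IsFlowChain φ ε T N x t p p) :
    IsChainTransitiveSet φ {p} := by
  rintro _ rfl _ rfl
  exact h

theorem mem_morseSpec_of_forall_exists_loop [MetricSpace E] [NormedSpace ℝ V]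
    {φ : Flow ℝ E} {a : ℝ → E → V} {M : Set E} {p : E} (hp : p ∈ M) {l : V}
    (h : ∀ ε > (0:ℝ), ∀ T > (0:ℝ), ∀ η > (0:ℝ),
      ∃ N x t, IsFlowChain φ ε T N x t p p ∧ dist (chainExp a N x t) l < η) :
    l ∈ morseSpec φ a M := by
  simp only [morseSpec, Set.mem_iInter, Metric.mem_closure_iff]
  intro ε hε T hT η hη
  obtain ⟨N, x, t, hchain, hdist⟩ := h ε hε T hT η hη
  exact ⟨_, ⟨N, x, t, p, hp, p, hp, hchain, rfl⟩, by rwa [dist_comm]⟩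

end

section

variable {E : Type*} [MetricSpace E] [CompactSpace E]
variable {V : Type*} [NormedAddCommGroup V] [NormedSpace ℝ V] [FiniteDimensional ℝ V]

theorem lyapSpec_subset_union_morseSpec_general (φ : Flow ℝ E) (a : ℝ → E → V)
    (ha : IsAddCocycle φ a) (n : ℕ) (M : Fin n → Set E)
    (hall : ∀ M' : Set E, IsChainComponent φ M' → ∃ i, M' = M i) :
    lyapSpec a (Set.univ : Set E) ⊆ ⋃ i, morseSpec φ a (M i) := by
  rintro l ⟨x, -, hx⟩
  obtain ⟨p, hp⟩ := exists_clusterPt_of_compactSpace (map (fun t : ℝ => φ t x) atTop)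
  have hloop : ∀ ε > (0:ℝ), ∀ T > (0:ℝ), ∀ η > (0:ℝ),
      ∃ N xs ts, IsFlowChain φ ε T N xs ts p p ∧ dist (chainExp a N xs ts) l < η :=
    fun ε hε T _ η hη => exists_flowChain_loop_chainExp_near ha hx hp hε hη T
  have hp_trans : IsChainTransitiveSet φ {p} := isChainTransitiveSet_singleton fun ε hε T hT =>
    let ⟨N, xs, ts, hchain, _⟩ := hloop ε hε T hT 1 one_pos
    ⟨N, xs, ts, hchain⟩
  obtain ⟨_, hcomp, hpM⟩ := hp_trans.exists_isChainComponent_superset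
  obtain ⟨i, rfl⟩ := hall _ hcomp
  exact Set.mem_iUnion.2 ⟨i, mem_morseSpec_of_forall_exists_loop (hpM rfl) hloop⟩

/-- If the flow has only finitely many chain components `M 0, …, M (n-1)` (which
then form the finest Morse decomposition), the Lyapunov spectrum of the whole
space is contained in the union of their Morse spectra. -/
theorem lyapSpec_subset_union_morseSpec (φ : Flow ℝ E) (a : ℝ → E → V)
    (ha : IsAddCocycle φ a) (n : ℕ) (M : Fin n → Set E)
    (hM : ∀ i, IsChainComponent φ (M i))
    (hall : ∀ M' : Set E, IsChainComponent φ M' → ∃ i, M' = M i) :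
    lyapSpec a (Set.univ : Set E) ⊆ ⋃ i, morseSpec φ a (M i) :=
  lyapSpec_subset_union_morseSpec_general φ a ha n M hall

end
end

section
/- Let M ⊆ E be a chain component of φ. Then the Lyapunov spectrum of M is contained in the Morse spectrum of M: Λ_Ly(M) ⊆ Λ_Mo(M). -/
open Filter Topology

section

variable {E : Type*} [MetricSpace E] [CompactSpace E]
variable {V : Type*} [NormedAddCommGroup V] [NormedSpace ℝ V] [FiniteDimensional ℝ V]

private theorem shiftStart' (φ : Flow ℝ E) (ε T s : ℝ) (hs : 0 ≤ s) (N : ℕ) (y : ℕ → E)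
    (t : ℕ → ℝ) (x q : E) (h : IsFlowChain φ ε (T + s) N y t x q) :
    IsFlowChain φ ε T N (fun i => if i = 0 then φ s x else y i)
      (fun i => if i = 0 then t i - s else t i) (φ s x) q := by
  obtain ⟨hN, h0, hNq, ht, hd⟩ := h
  refine ⟨hN, by dsimp only; rw [if_pos rfl], by dsimp only; rw [if_neg hN.ne']; exact hNq,
    ?_, ?_⟩
  · intro i hi
    dsimp only
    by_cases hi0 : i = 0
    · rw [if_pos hi0]; subst hi0; linarith [ht 0 hN]
    · rw [if_neg hi0]; linarith [ht i hi]
  · intro i hi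
    dsimp only
    by_cases hi0 : i = 0
    · subst hi0
      rw [if_pos rfl, if_pos rfl, if_neg Nat.one_ne_zero, ← Flow.map_add, sub_add_cancel, ← h0]
      exact hd 0 hN
    · rw [if_neg hi0, if_neg hi0, if_neg (Nat.succ_ne_zero i)]
      exact hd i hi

private theorem shiftEnd' (φ : Flow ℝ E) (ε ε' T s : ℝ) (hs : 0 ≤ s)
    (hε' : ∀ u v : E, dist u v < ε' → dist (φ s u) (φ s v) < ε)
    (N : ℕ) (y : ℕ → E) (t : ℕ → ℝ) (p x : E)
    (h : IsFlowChain φ (min ε ε') T N y t p x) :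
    IsFlowChain φ ε T N (fun i => if i = N then φ s x else y i)
      (fun i => if i = N - 1 then t i + s else t i) p (φ s x) := by
  obtain ⟨hN, h0, hNq, ht, hd⟩ := h
  refine ⟨hN, by dsimp only; rw [if_neg hN.ne]; exact h0, by dsimp only; rw [if_pos rfl],
    ?_, ?_⟩
  · intro i hi
    dsimp only
    by_cases hi0 : i = N - 1
    · rw [if_pos hi0]; linarith [ht i hi]
    · rw [if_neg hi0]; exact ht i hi
  · intro i hi
    dsimp only
    by_cases hi0 : i = N - 1
    · have hiN : i + 1 = N := by omega
      rw [if_pos hi0, if_pos hiN, if_neg (by omega : i ≠ N), add_comm, Flow.map_add]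
      refine hε' _ _ ?_
      have h2 := hd i hi
      rw [hiN, hNq] at h2
      exact lt_of_lt_of_le h2 (min_le_right _ _)
    · have h1 : i + 1 ≠ N := by omega
      rw [if_neg hi0, if_neg h1, if_neg (by omega : i ≠ N)]
      exact lt_of_lt_of_le (hd i hi) (min_le_left _ _)

/-- A chain component is forward invariant. -/
private theorem chainComponent_fwd_invariant (φ : Flow ℝ E) (M : Set E)
    (hM : IsChainComponent φ M) (x : E) (hx : x ∈ M) (s : ℝ) (hs : 0 ≤ s) : φ s x ∈ M := by
  have hct : IsChainTransitiveSet φ (insert (φ s x) M) := by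
    intro p hp q hq ε hε T hT
    have huc : UniformContinuous (φ.toFun s) :=
      CompactSpace.uniformContinuous_of_continuous (φ.continuous_toFun s)
    obtain ⟨ε', hε'pos, hε'⟩ := Metric.uniformContinuous_iff.mp huc ε hε
    have hε'' : ∀ u v : E, dist u v < ε' → dist (φ s u) (φ s v) < ε := fun u v h => hε' h
    rcases Set.mem_insert_iff.mp hp with hp | hp <;>
      rcases Set.mem_insert_iff.mp hq with hq | hq
    · -- p = φ s x, q = φ s x
      obtain ⟨N, y, t, hch⟩ :=
        hM.1 x hx x hx (min ε ε') (lt_min hε hε'pos) (T + s) (by linarith)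
      have c1 := shiftEnd' φ ε ε' (T + s) s hs hε'' N y t x x hch
      have c2 := shiftStart' φ ε T s hs N _ _ x (φ s x) c1
      subst hp; subst hq
      exact ⟨N, _, _, c2⟩
    · -- p = φ s x, q ∈ M
      obtain ⟨N, y, t, hch⟩ := hM.1 x hx q hq ε hε (T + s) (by linarith)
      have c := shiftStart' φ ε T s hs N y t x q hch
      subst hp
      exact ⟨N, _, _, c⟩
    · -- p ∈ M, q = φ s x
      obtain ⟨N, y, t, hch⟩ := hM.1 p hp x hx (min ε ε') (lt_min hε hε'pos) T hT
      have c := shiftEnd' φ ε ε' T s hs hε'' N y t p x hch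
      subst hq
      exact ⟨N, _, _, c⟩
    · exact hM.1 p hp q hq ε hε T hT
  have hMeq : M = insert (φ s x) M := hM.2 _ hct (Set.subset_insert _ _)
  rw [hMeq]
  exact Set.mem_insert _ _

/-- The Lyapunov spectrum of a chain component is contained in its Morse spectrum. -/
theorem lyapSpec_subset_morseSpec (φ : Flow ℝ E) (a : ℝ → E → V)
    (ha : IsAddCocycle φ a) (M : Set E) (hM : IsChainComponent φ M) :
    lyapSpec a M ⊆ morseSpec φ a M := by
  rintro l ⟨x, hx, hl⟩
  simp only [morseSpec, Set.mem_iInter]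
  intro ε hε T hT
  refine mem_closure_of_tendsto hl ?_
  filter_upwards [eventually_ge_atTop T] with S hS
  have hS0 : (0:ℝ) ≤ S := le_trans hT.le hS
  refine ⟨1, (fun i => if i = 0 then x else φ S x), (fun _ => S), x, hx, φ S x,
    chainComponent_fwd_invariant φ M hM x hx S hS0, ?_, ?_⟩
  · refine ⟨one_pos, by dsimp only; rw [if_pos rfl], by dsimp only; rw [if_neg one_ne_zero],
      fun i hi => hS, fun i hi => ?_⟩
    have : i = 0 := by omega
    subst this
    simpa using hε
  · simp [chainExp, Finset.sum_range_one]


end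
end

section
/- (Uniformity lemma for contracting linear flows.) Let X be a compact metric space, φ a continuous flow on X, F a finite-dimensional real normed vector space, and Φ : 𝕋 × X → L(F,F) a continuous map into the continuous linear endomorphisms of F satisfying the cocycle property Φ(t+s, x) = Φ(t, s·x) ∘ Φ(s, x) and Φ(0,x) = id. Consider the skew-product linear flow Ψ_t(x,v) = (t·x, Φ(t,x)v) on X × F. If the zero section X × {0} is an attractor for Ψ, then there exist constants C > 0 and μ > 0 such that the operator norm satisfies ‖Φ(t,x)‖ ≤ C e^{−μt} for all t ≥ 0 and all x ∈ X. -/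
open Filter Topology

/-- Uniformity lemma for contracting linear flows: if `Φ` is a continuous linear
cocycle over a flow `φ` on a compact metric space `X` and the zero section
`X × {0}` is an attractor for the skew-product flow `Ψ t (x, v) = (φ t x, Φ t x v)`
on `X × F`, then `Φ` contracts uniformly exponentially: there are constants
`C > 0` and `μ > 0` with `‖Φ t x‖ ≤ C * exp (-μ * t)` for all `t ≥ 0` and `x`. -/
theorem uniformity_lemma_contraction
    {X : Type*} [MetricSpace X] [CompactSpace X]
    {F : Type*} [NormedAddCommGroup F] [NormedSpace ℝ F] [FiniteDimensional ℝ F]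
    (φ : Flow ℝ X) (Φ : ℝ → X → F →L[ℝ] F)
    (hcont : Continuous fun p : ℝ × X => Φ p.1 p.2)
    (hcoc : ∀ (t s : ℝ) (x : X), Φ (t + s) x = (Φ t (φ s x)).comp (Φ s x))
    (hid : ∀ x : X, Φ 0 x = ContinuousLinearMap.id ℝ F)
    (hattr : ∃ U : Set (X × F), U ∈ 𝓝ˢ {p : X × F | p.2 = 0} ∧
      (⋂ s : ℝ, closure (⋃ t ∈ Set.Ici s,
          (fun p : X × F => (φ t p.1, Φ t p.1 p.2)) '' U))
        = {p : X × F | p.2 = 0}) :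
    ∃ C > (0:ℝ), ∃ μ > (0:ℝ), ∀ t ≥ (0:ℝ), ∀ x : X,
      ‖Φ t x‖ ≤ C * Real.exp (-μ * t) := by
  classical
  -- degenerate cases
  rcases isEmpty_or_nonempty X with hX | hX
  · exact ⟨1, one_pos, 1, one_pos, fun t _ x => (IsEmpty.false x).elim⟩
  rcases subsingleton_or_nontrivial F with hF | hF
  · refine ⟨1, one_pos, 1, one_pos, fun t _ x => ?_⟩
    have : Φ t x = 0 := ContinuousLinearMap.ext fun v => Subsingleton.elim _ _
    rw [this, norm_zero]
    positivity
  obtain ⟨U, hU, hω⟩ := hattr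
  set Z : Set (X × F) := {p : X × F | p.2 = 0} with hZdef
  have hZcomp : IsCompact Z := by
    have : Z = (Set.univ : Set X) ×ˢ ({0} : Set F) := by
      ext ⟨x, v⟩; simp [hZdef, eq_comm]
    rw [this]
    exact isCompact_univ.prod isCompact_singleton
  -- find a uniform tube inside U
  have hZint : Z ⊆ interior U := subset_interior_iff_mem_nhdsSet.mpr hU
  obtain ⟨δ, δpos, hδU⟩ := hZcomp.exists_cthickening_subset_open isOpen_interior hZint
  have htube : ∀ (x : X) (v : F), ‖v‖ ≤ δ → (x, v) ∈ U := by
    intro x v hv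
    have h0 : ((x, (0:F)) : X × F) ∈ Z := rfl
    have hd : dist ((x, v) : X × F) (x, 0) ≤ δ := by
      rw [Prod.dist_eq]
      simp [dist_eq_norm, hv]
    exact interior_subset (hδU (Metric.mem_cthickening_of_dist_le _ _ _ _ h0 hd))
  -- the sets A s
  set A : ℝ → Set (X × F) := fun s => closure (⋃ t ∈ Set.Ici s,
      (fun p : X × F => (φ t p.1, Φ t p.1 p.2)) '' U) with hAdef
  have hAanti : ∀ s s' : ℝ, s ≤ s' → A s' ⊆ A s := by
    intro s s' hss
    apply closure_mono
    apply Set.biUnion_subset_biUnion_left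
    exact Set.Ici_subset_Ici.mpr hss
  -- the compact set K disjoint from the zero section
  set K : Set (X × F) := (Set.univ : Set X) ×ˢ Metric.sphere (0:F) δ with hKdef
  have hKcomp : IsCompact K := isCompact_univ.prod (isCompact_sphere 0 δ)
  have hKclosed : IsClosed K := isClosed_univ.prod Metric.isClosed_sphere
  -- find s₀ with A s₀ ∩ K = ∅
  have hs₀ : ∃ s₀ : ℝ, A s₀ ∩ K = ∅ := by
    by_contra h
    push_neg at h
    have hne : ∀ s : ℝ, (A s ∩ K).Nonempty := h
    have hdir : Directed (· ⊇ ·) fun s : ℝ => A s ∩ K := by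
      intro s s'
      exact ⟨max s s', Set.inter_subset_inter_left _ (hAanti s _ (le_max_left _ _)),
        Set.inter_subset_inter_left _ (hAanti s' _ (le_max_right _ _))⟩
    have hcomp : ∀ s : ℝ, IsCompact (A s ∩ K) := fun s =>
      hKcomp.inter_left isClosed_closure
    have hcl : ∀ s : ℝ, IsClosed (A s ∩ K) := fun s =>
      isClosed_closure.inter hKclosed
    obtain ⟨p, hp⟩ := IsCompact.nonempty_iInter_of_directed_nonempty_isCompact_isClosed
      _ hdir hne hcomp hcl
    rw [Set.mem_iInter] at hp
    have hpZ : p ∈ Z := by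
      rw [← hω, Set.mem_iInter]
      exact fun s => (hp s).1
    have hpK : p ∈ K := (hp 0).2
    have h1 : p.2 = 0 := hpZ
    have h2 : ‖p.2‖ = δ := by
      have := hpK.2
      simpa [dist_eq_norm] using this
    rw [h1, norm_zero] at h2
    exact absurd h2.symm (ne_of_gt δpos)
  obtain ⟨s₀, hs₀⟩ := hs₀
  set T : ℝ := max s₀ 1 with hTdef
  have hT1 : (1:ℝ) ≤ T := le_max_right _ _
  have hTpos : (0:ℝ) < T := lt_of_lt_of_le one_pos hT1
  -- Claim 1 : no vector in the tube is mapped exactly onto the sphere at time T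
  have claim1 : ∀ (x : X) (v : F), ‖v‖ ≤ δ → ‖Φ T x v‖ ≠ δ := by
    intro x v hv heq
    have hmem : ((φ T x, Φ T x v) : X × F) ∈ A s₀ := by
      apply subset_closure
      refine Set.mem_biUnion (le_max_left s₀ 1) ?_
      exact ⟨(x, v), htube x v hv, rfl⟩
    have hmemK : ((φ T x, Φ T x v) : X × F) ∈ K := by
      constructor
      · trivial
      · simpa [dist_eq_norm] using heq
    have : ((φ T x, Φ T x v) : X × F) ∈ A s₀ ∩ K := ⟨hmem, hmemK⟩
    rw [hs₀] at this
    exact this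
  -- Claim 2 : strict contraction into the ball, via IVT
  have claim2 : ∀ (x : X) (v : F), ‖v‖ ≤ δ → ‖Φ T x v‖ < δ := by
    intro x v hv
    by_contra h
    push_neg at h
    set f : ℝ → ℝ := fun r => ‖Φ T x (r • v)‖ with hfdef
    have hfc : Continuous f :=
      ((Φ T x).continuous.comp (continuous_id.smul continuous_const)).norm
    have hf0 : f 0 = 0 := by simp [hfdef]
    have hf1 : δ ≤ f 1 := by simpa [hfdef] using h
    have : δ ∈ Set.Icc (f 0) (f 1) := ⟨by rw [hf0]; exact δpos.le, hf1⟩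
    obtain ⟨r, hr, hfr⟩ := intermediate_value_Icc zero_le_one hfc.continuousOn this
    have hrv : ‖r • v‖ ≤ δ := by
      rw [norm_smul, Real.norm_eq_abs, abs_of_nonneg hr.1]
      calc r * ‖v‖ ≤ 1 * ‖v‖ := by
            apply mul_le_mul_of_nonneg_right hr.2 (norm_nonneg v)
        _ = ‖v‖ := one_mul _
        _ ≤ δ := hv
    exact claim1 x (r • v) hrv hfr
  -- Claim 3 : uniform operator-norm contraction at time T
  have hsphne : (Metric.sphere (0:F) δ).Nonempty := by
    exact NormedSpace.sphere_nonempty.mpr δpos.le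
  have hKne : K.Nonempty := by
    obtain ⟨x₀⟩ := hX
    obtain ⟨v₀, hv₀⟩ := hsphne
    exact ⟨(x₀, v₀), ⟨trivial, hv₀⟩⟩
  have heval : Continuous fun p : X × F => ‖Φ T p.1 p.2‖ := by
    have h1 : Continuous fun p : X × F => Φ T p.1 :=
      hcont.comp (continuous_const.prodMk continuous_fst)
    exact (isBoundedBilinearMap_apply.continuous.comp (h1.prodMk continuous_snd)).norm
  obtain ⟨p₀, hp₀K, hp₀max⟩ := hKcomp.exists_isMaxOn hKne heval.continuousOn
  set m : ℝ := ‖Φ T p₀.1 p₀.2‖ with hmdef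
  have hmlt : m < δ := by
    apply claim2
    have := hp₀K.2
    rw [mem_sphere_iff_norm, sub_zero] at this
    exact this.le
  have hmnn : (0:ℝ) ≤ m := norm_nonneg _
  set c : ℝ := max (m / δ) (1/2) with hcdef
  have hcpos : (0:ℝ) < c := lt_of_lt_of_le one_half_pos (le_max_right _ _)
  have hclt1 : c < 1 := by
    apply max_lt _ (by norm_num)
    exact (div_lt_one δpos).mpr hmlt
  have hΦT : ∀ x : X, ‖Φ T x‖ ≤ c := by
    intro x
    apply ContinuousLinearMap.opNorm_le_bound _ hcpos.le
    intro v
    rcases eq_or_ne v 0 with rfl | hv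
    · simp
    · have hvpos : (0:ℝ) < ‖v‖ := norm_pos_iff.mpr hv
      set w : F := (δ / ‖v‖) • v with hwdef
      have hwnorm : ‖w‖ = δ := by
        rw [hwdef, norm_smul, Real.norm_eq_abs,
          abs_of_pos (div_pos δpos hvpos), div_mul_cancel₀ _ (ne_of_gt hvpos)]
      have hwK : ((x, w) : X × F) ∈ K :=
        ⟨trivial, by rw [mem_sphere_iff_norm, sub_zero]; exact hwnorm⟩
      have hle : ‖Φ T x w‖ ≤ m := hp₀max hwK
      have hmap : Φ T x w = (δ / ‖v‖) • Φ T x v := by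
        rw [hwdef, map_smul]
      rw [hmap, norm_smul, Real.norm_eq_abs, abs_of_pos (div_pos δpos hvpos)] at hle
      have h1 : ‖Φ T x v‖ ≤ m / δ * ‖v‖ := by
        have h2 := mul_le_mul_of_nonneg_left hle (div_pos hvpos δpos).le
        have h3 : ‖v‖ / δ * (δ / ‖v‖ * ‖Φ T x v‖) = ‖Φ T x v‖ := by
          field_simp
        rw [h3] at h2
        calc ‖Φ T x v‖ ≤ ‖v‖ / δ * m := h2
          _ = m / δ * ‖v‖ := by ring
      exact h1.trans (mul_le_mul_of_nonneg_right (le_max_left _ _) (norm_nonneg v))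
  -- the constant M : bound on [0, T]
  obtain ⟨x₀⟩ := hX
  have hIcc : IsCompact ((Set.Icc (0:ℝ) T) ×ˢ (Set.univ : Set X)) :=
    isCompact_Icc.prod isCompact_univ
  have hIccne : ((Set.Icc (0:ℝ) T) ×ˢ (Set.univ : Set X)).Nonempty :=
    ⟨(0, x₀), ⟨⟨le_refl 0, hTpos.le⟩, trivial⟩⟩
  obtain ⟨q₀, _, hq₀max⟩ := hIcc.exists_isMaxOn hIccne hcont.norm.continuousOn
  set M : ℝ := ‖Φ q₀.1 q₀.2‖ with hMdef
  have hMnn : (0:ℝ) ≤ M := norm_nonneg _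
  have hM : ∀ r : ℝ, 0 ≤ r → r ≤ T → ∀ x : X, ‖Φ r x‖ ≤ M := by
    intro r hr0 hrT x
    exact hq₀max (show ((r, x) : ℝ × X) ∈ (Set.Icc (0:ℝ) T) ×ˢ (Set.univ : Set X)
      from ⟨⟨hr0, hrT⟩, trivial⟩)
  -- the key induction
  have key : ∀ n : ℕ, ∀ r : ℝ, 0 ≤ r → r < T → ∀ x : X,
      ‖Φ ((n : ℝ) * T + r) x‖ ≤ M * c ^ n := by
    intro n
    induction n with
    | zero =>
      intro r hr0 hrT x
      simpa using hM r hr0 hrT.le x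
    | succ n ih =>
      intro r hr0 hrT x
      have hrw : ((n + 1 : ℕ) : ℝ) * T + r = ((n : ℝ) * T + r) + T := by
        push_cast; ring
      rw [hrw, hcoc]
      calc ‖(Φ ((n:ℝ) * T + r) (φ T x)).comp (Φ T x)‖
          ≤ ‖Φ ((n:ℝ) * T + r) (φ T x)‖ * ‖Φ T x‖ :=
            ContinuousLinearMap.opNorm_comp_le _ _
        _ ≤ (M * c ^ n) * c := by
            apply mul_le_mul (ih r hr0 hrT (φ T x)) (hΦT x) (norm_nonneg _)
            positivity
        _ = M * c ^ (n + 1) := by ring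
  -- conclusion
  have hlogc : Real.log c < 0 := Real.log_neg hcpos hclt1
  set μ : ℝ := -Real.log c / T with hμdef
  have hμpos : 0 < μ := div_pos (neg_pos.mpr hlogc) hTpos
  refine ⟨M / c + 1, by positivity, μ, hμpos, ?_⟩
  intro t ht x
  set n : ℕ := ⌊t / T⌋₊ with hndef
  have hn1 : (n : ℝ) * T ≤ t := by
    rw [← le_div_iff₀ hTpos]
    exact Nat.floor_le (div_nonneg ht hTpos.le)
  have hn2 : t < ((n : ℝ) + 1) * T := by
    rw [← div_lt_iff₀ hTpos]
    exact Nat.lt_floor_add_one _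
  set r : ℝ := t - (n : ℝ) * T with hrdef
  have hr0 : 0 ≤ r := by simp [hrdef]; linarith
  have hrT : r < T := by rw [hrdef]; nlinarith
  have htr : (n : ℝ) * T + r = t := by rw [hrdef]; ring
  have hkey : ‖Φ t x‖ ≤ M * c ^ n := by
    have := key n r hr0 hrT x
    rwa [htr] at this
  refine hkey.trans ?_
  -- now show M * c^n ≤ (M/c + 1) * exp (-μ t)
  have hcn : c ^ n = Real.exp ((n : ℝ) * Real.log c) := by
    rw [Real.exp_nat_mul, Real.exp_log hcpos]
  have hexp1 : (n : ℝ) * Real.log c ≤ (t / T - 1) * Real.log c := by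
    apply mul_le_mul_of_nonpos_right _ hlogc.le
    have : t / T < (n : ℝ) + 1 := by
      rw [div_lt_iff₀ hTpos]; linarith [hn2]
    linarith
  have heq1 : (t / T - 1) * Real.log c = -μ * t - Real.log c := by
    rw [hμdef]; field_simp
  have hfinal : c ^ n ≤ Real.exp (-μ * t) / c := by
    rw [hcn, le_div_iff₀ hcpos]
    have h4 : Real.exp ((n : ℝ) * Real.log c) * c
        = Real.exp ((n : ℝ) * Real.log c + Real.log c) := by
      rw [Real.exp_add, Real.exp_log hcpos]
    rw [h4]
    apply Real.exp_le_exp.mpr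
    linarith [hexp1, heq1.le, heq1.ge]
  calc M * c ^ n ≤ M * (Real.exp (-μ * t) / c) :=
        mul_le_mul_of_nonneg_left hfinal hMnn
    _ = (M / c) * Real.exp (-μ * t) := by ring
    _ ≤ (M / c + 1) * Real.exp (-μ * t) := by
        apply mul_le_mul_of_nonneg_right _ (Real.exp_pos _).le
        linarith
end

section
/- Let Π be a finite root system in the dual of a finite-dimensional real inner product space 𝔞, with simple system Σ, positive system Π⁺, open fundamental Weyl chamber 𝔞⁺ = {H ∈ 𝔞 : α(H) > 0 for all α ∈ Σ}, and Weyl group W. For Θ ⊆ Σ let ⟨Θ⟩ = Π ∩ span_ℝ(Θ) and let W_Θ ⊆ W be the subgroup generated by the reflections s_α with α ∈ Θ. Then {H ∈ 𝔞 : α(H) ≥ 0 for all α ∈ Π⁺ \ ⟨Θ⟩} = W_Θ · cl(𝔞⁺), the union of the images of the closed fundamental chamber under the elements of W_Θ. -/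
open Filter Topology

section

variable {𝔞 : Type*} [NormedAddCommGroup 𝔞] [InnerProductSpace ℝ 𝔞] [FiniteDimensional ℝ 𝔞]

/-- The vector `u ∈ 𝔞` representing the functional `α` via the inner product:
`α x = ⟪u, x⟫` for all `x`. -/
noncomputable def rieszVec (α : 𝔞 →ₗ[ℝ] ℝ) : 𝔞 :=
  (InnerProductSpace.toDual ℝ 𝔞).symm (LinearMap.toContinuousLinearMap α)

/-- The orthogonal reflection of `𝔞` in the hyperplane `ker α`:
`x ↦ x - (2 α x / α u) • u`, where `u` is the Riesz vector of `α`. -/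
noncomputable def rootRefl (α : 𝔞 →ₗ[ℝ] ℝ) : Module.End ℝ 𝔞 :=
  LinearMap.id - (2 / α (rieszVec α)) • (α.smulRight (rieszVec α))

/-- `RS` bundles the data of a finite (possibly non-reduced) root system
`rts ⊆ 𝔞* \ {0}`, stable under the (duals of the) root reflections, together
with a positive system `pos` coming from a simple system `sim`. -/
structure IsRootSystemWithBase (rts pos : Set (𝔞 →ₗ[ℝ] ℝ)) (sim : Finset (𝔞 →ₗ[ℝ] ℝ)) : Prop where
  finite : rts.Finite
  ne_zero : (0 : 𝔞 →ₗ[ℝ] ℝ) ∉ rts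
  refl_mem : ∀ α ∈ rts, ∀ β ∈ rts, β ∘ₗ (rootRefl α : 𝔞 →ₗ[ℝ] 𝔞) ∈ rts
  sim_subset : ↑sim ⊆ pos
  pos_subset : pos ⊆ rts
  union : rts = pos ∪ (fun β => -β) '' pos
  disjoint : Disjoint pos ((fun β => -β) '' pos)
  pos_comb : ∀ β ∈ pos, ∃ c : (𝔞 →ₗ[ℝ] ℝ) → ℝ,
    (∀ α ∈ sim, 0 ≤ c α) ∧ β = ∑ α ∈ sim, c α • α
  indep : LinearIndependent ℝ (fun α : sim => (α : 𝔞 →ₗ[ℝ] ℝ))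

/-- The open fundamental Weyl chamber determined by the simple system `sim`. -/
def weylChamber (sim : Finset (𝔞 →ₗ[ℝ] ℝ)) : Set 𝔞 :=
  {H : 𝔞 | ∀ α ∈ sim, 0 < α H}

/-- `⟨Θ⟩ = Π ∩ span ℝ Θ`, the roots lying in the span of `Θ`. -/
def rootsSpannedBy (rts : Set (𝔞 →ₗ[ℝ] ℝ)) (Θ : Finset (𝔞 →ₗ[ℝ] ℝ)) : Set (𝔞 →ₗ[ℝ] ℝ) :=
  rts ∩ (Submodule.span ℝ (↑Θ : Set (𝔞 →ₗ[ℝ] ℝ)) : Set (𝔞 →ₗ[ℝ] ℝ))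

/-- The subgroup `W_Θ` of the Weyl group generated by the reflections `s_α`,
`α ∈ Θ` (as a submonoid of `End 𝔞`; since the reflections are involutions this
has the same elements as the generated group). -/
noncomputable def weylSubmonoid (Θ : Set (𝔞 →ₗ[ℝ] ℝ)) : Submonoid (Module.End ℝ 𝔞) :=
  Submonoid.closure (rootRefl '' Θ)

/-!
For `α ∈ Θ`, the reflection `s_α` maps every positive root not proportional to `α` to a positive
root and preserves `span Θ`, so `β ↦ β ∘ s_α` maps `Π⁺ \ ⟨Θ⟩` into itself. Hence `W_Θ` preserves
the cone on the left, which contains `cl(𝔞⁺)`. Conversely, if `H` lies in the cone but not in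
`cl(𝔞⁺)`, some simple root `α` is negative at `H`, and `α ∈ Θ` because simple roots outside `Θ` are
not in `⟨Θ⟩`. Then `s_α H` is again in the cone, and `β ↦ β ∘ s_α` maps the positive roots of `⟨Θ⟩`
negative at `s_α H` injectively into those negative at `H`, minus `α`; induction on their number
writes `H = w H₀` with `w ∈ W_Θ` and `H₀ ∈ cl(𝔞⁺)`.
-/

open scoped RealInnerProductSpace

lemma apply_eq_inner_rieszVec (α : 𝔞 →ₗ[ℝ] ℝ) (x : 𝔞) : α x = ⟪rieszVec α, x⟫ := by
  simp [rieszVec, InnerProductSpace.toDual_symm_apply]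

lemma apply_rieszVec_pos {α : 𝔞 →ₗ[ℝ] ℝ} (hα : α ≠ 0) : 0 < α (rieszVec α) := by
  rw [apply_eq_inner_rieszVec, real_inner_self_pos]
  intro h
  exact hα (LinearMap.ext fun x => by rw [apply_eq_inner_rieszVec, h, inner_zero_left]; rfl)

lemma rootRefl_apply (α : 𝔞 →ₗ[ℝ] ℝ) (x : 𝔞) :
    rootRefl α x = x - (2 * α x / α (rieszVec α)) • rieszVec α := by
  simp [rootRefl, smul_smul]
  ring_nf

lemma comp_rootRefl (α β : 𝔞 →ₗ[ℝ] ℝ) :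
    β ∘ₗ rootRefl α = β - (2 * β (rieszVec α) / α (rieszVec α)) • α := by
  ext x
  simp [rootRefl_apply]
  ring

lemma comp_rootRefl_self {α : 𝔞 →ₗ[ℝ] ℝ} (hα : α ≠ 0) : α ∘ₗ rootRefl α = -α := by
  rw [comp_rootRefl, mul_div_assoc, div_self (apply_rieszVec_pos hα).ne', mul_one, two_smul]
  abel

lemma rootRefl_mul_self {α : 𝔞 →ₗ[ℝ] ℝ} (hα : α ≠ 0) : rootRefl α * rootRefl α = 1 := by
  ext x
  have hx : α (rootRefl α x) = -α x := LinearMap.congr_fun (comp_rootRefl_self hα) x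
  rw [Module.End.mul_apply, rootRefl_apply _ (rootRefl α x), hx, rootRefl_apply]
  simp [neg_div]

lemma involutive_comp_rootRefl {α : 𝔞 →ₗ[ℝ] ℝ} (hα : α ≠ 0) :
    Function.Involutive fun β : 𝔞 →ₗ[ℝ] ℝ => β ∘ₗ rootRefl α := fun β => by
  dsimp only
  rw [LinearMap.comp_assoc, ← Module.End.mul_eq_comp, rootRefl_mul_self hα, Module.End.one_eq_id,
    LinearMap.comp_id]

lemma weylChamber_nonempty {sim : Finset (𝔞 →ₗ[ℝ] ℝ)}
    (hsim : LinearIndepOn ℝ id (sim : Set (𝔞 →ₗ[ℝ] ℝ))) : (weylChamber sim).Nonempty := by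
  obtain ⟨f, hf⟩ := Module.exists_dual_forall_apply_eq_one hsim
  exact ⟨(Module.evalEquiv ℝ 𝔞).symm f, fun γ hγ => by simp [show f γ = 1 from hf γ hγ]⟩

lemma closure_weylChamber {sim : Finset (𝔞 →ₗ[ℝ] ℝ)}
    (hsim : LinearIndepOn ℝ id (sim : Set (𝔞 →ₗ[ℝ] ℝ))) :
    closure (weylChamber sim) = {H : 𝔞 | ∀ γ ∈ sim, 0 ≤ γ H} := by
  refine (closure_minimal (fun H hH γ hγ => (hH γ hγ).le) ?_).antisymm fun H hH => ?_
  · simp only [Set.ofPred_forall]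
    exact isClosed_biInter fun γ _ =>
      isClosed_le continuous_const (LinearMap.continuous_of_finiteDimensional γ)
  · obtain ⟨H₀, hH₀⟩ := weylChamber_nonempty hsim
    have hlim : Tendsto (fun t : ℝ => H + t • H₀) (𝓝[>] 0) (𝓝 H) :=
      tendsto_nhdsWithin_of_tendsto_nhds (Continuous.tendsto' (by fun_prop) 0 H (by simp))
    refine mem_closure_of_tendsto hlim ?_
    filter_upwards [self_mem_nhdsWithin] with t (ht : 0 < t) γ hγ
    simpa using add_pos_of_nonneg_of_pos (hH γ hγ) (mul_pos ht (hH₀ γ hγ))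

def negSpannedPosRoots (pos : Set (𝔞 →ₗ[ℝ] ℝ)) (Θ : Finset (𝔞 →ₗ[ℝ] ℝ)) (H : 𝔞) :
    Set (𝔞 →ₗ[ℝ] ℝ) :=
  {β ∈ pos | β ∈ Submodule.span ℝ (Θ : Set (𝔞 →ₗ[ℝ] ℝ)) ∧ β H < 0}

namespace IsRootSystemWithBase

variable {rts pos : Set (𝔞 →ₗ[ℝ] ℝ)} {sim Θ : Finset (𝔞 →ₗ[ℝ] ℝ)} {α β : 𝔞 →ₗ[ℝ] ℝ} {H : 𝔞}

lemma ne_zero_of_mem_pos (hRS : IsRootSystemWithBase rts pos sim) (hβ : β ∈ pos) : β ≠ 0 := by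
  rintro rfl
  exact hRS.ne_zero (hRS.pos_subset hβ)

lemma neg_notMem_pos (hRS : IsRootSystemWithBase rts pos sim) (hβ : β ∈ pos) : -β ∉ pos :=
  fun h => Set.disjoint_left.mp hRS.disjoint h ⟨β, hβ, rfl⟩

lemma apply_nonneg_of_mem_pos (hRS : IsRootSystemWithBase rts pos sim) (hβ : β ∈ pos)
    (hH : ∀ γ ∈ sim, 0 ≤ γ H) : 0 ≤ β H := by
  obtain ⟨c, hc, rfl⟩ := hRS.pos_comb β hβ
  simpa using Finset.sum_nonneg fun γ hγ => mul_nonneg (hc γ hγ) (hH γ hγ)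

lemma apply_pos_of_mem_pos (hRS : IsRootSystemWithBase rts pos sim) (hβ : β ∈ pos)
    (hH : H ∈ weylChamber sim) : 0 < β H := by
  obtain ⟨c, hc, hβc⟩ := hRS.pos_comb β hβ
  have hc_pos : ∃ γ ∈ sim, 0 < c γ := by
    by_contra! h
    refine hRS.ne_zero_of_mem_pos hβ (hβc ▸ Finset.sum_eq_zero fun γ hγ => ?_)
    rw [le_antisymm (h γ hγ) (hc γ hγ), zero_smul]
  obtain ⟨γ₀, hγ₀, hcγ₀⟩ := hc_pos
  rw [hβc]
  simpa using Finset.sum_pos' (fun γ hγ => mul_nonneg (hc γ hγ) (hH γ hγ).le)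
    ⟨γ₀, hγ₀, mul_pos hcγ₀ (hH γ₀ hγ₀)⟩

lemma linearIndepOn_sim (hRS : IsRootSystemWithBase rts pos sim) :
    LinearIndepOn ℝ id (sim : Set (𝔞 →ₗ[ℝ] ℝ)) :=
  hRS.indep

lemma notMem_span_of_mem_sim (hRS : IsRootSystemWithBase rts pos sim) (hΘ : Θ ⊆ sim)
    (hα : α ∈ sim) (hαΘ : α ∉ Θ) : α ∉ Submodule.span ℝ (Θ : Set (𝔞 →ₗ[ℝ] ℝ)) := by
  simpa using (hRS.linearIndepOn_sim.mono (Set.insert_subset hα hΘ)).notMem_span_of_insert hαΘ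

lemma mem_pos_of_coeff_pos (hRS : IsRootSystemWithBase rts pos sim) (hβ : β ∈ rts)
    (c : (𝔞 →ₗ[ℝ] ℝ) → ℝ) (hβc : β = ∑ γ ∈ sim, c γ • γ) (hα : α ∈ sim) (hcα : 0 < c α) :
    β ∈ pos := by
  rcases hRS.union ▸ hβ with hpos | ⟨δ, hδ, rfl⟩
  · exact hpos
  obtain ⟨d, hd, rfl⟩ := hRS.pos_comb δ hδ
  have hsum : ∑ γ ∈ sim, (c γ + d γ) • γ = 0 := by
    simp only [add_smul, Finset.sum_add_distrib, ← hβc, neg_add_cancel]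
  have := linearIndepOn_finset_iff.mp hRS.linearIndepOn_sim _ hsum α hα
  linarith [hd α hα]

lemma comp_rootRefl_mem_pos (hRS : IsRootSystemWithBase rts pos sim) (hα : α ∈ sim)
    (hβ : β ∈ pos) (hβα : β ∉ ℝ ∙ α) : β ∘ₗ rootRefl α ∈ pos := by
  classical
  obtain ⟨c, hc, hβc⟩ := hRS.pos_comb β hβ
  obtain ⟨γ₀, hγ₀, hγ₀α, hcγ₀⟩ : ∃ γ₀ ∈ sim, γ₀ ≠ α ∧ 0 < c γ₀ := by
    by_contra! h
    refine hβα (Submodule.mem_span_singleton.mpr ⟨c α, ?_⟩)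
    rw [hβc, Finset.sum_eq_single α (fun γ hγ hγα => by
      rw [le_antisymm (h γ hγ hγα) (hc γ hγ), zero_smul]) (absurd hα)]
  obtain ⟨k, hk⟩ : ∃ k : ℝ, β ∘ₗ rootRefl α = β - k • α := ⟨_, comp_rootRefl α β⟩
  have hrts : β ∘ₗ rootRefl α ∈ rts :=
    hRS.refl_mem α (hRS.pos_subset (hRS.sim_subset hα)) β (hRS.pos_subset hβ)
  refine hRS.mem_pos_of_coeff_pos hrts (fun γ => c γ - if γ = α then k else 0) ?_ hγ₀
    (by simpa [hγ₀α] using hcγ₀)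
  rw [hk]
  ext x
  simp [hβc, sub_mul, Finset.sum_sub_distrib, hα]

lemma pos_of_smul_mem_pos (hRS : IsRootSystemWithBase rts pos sim) (hα : α ∈ sim) {t : ℝ}
    (ht : t • α ∈ pos) : 0 < t := by
  obtain ⟨H₀, hH₀⟩ := weylChamber_nonempty hRS.linearIndepOn_sim
  have htα : 0 < t * α H₀ := by simpa using hRS.apply_pos_of_mem_pos ht hH₀
  exact pos_of_mul_pos_left htα (hH₀ α hα).le

lemma comp_rootRefl_mem_pos_diff (hRS : IsRootSystemWithBase rts pos sim) (hΘ : Θ ⊆ sim)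
    (hα : α ∈ Θ) (hβ : β ∈ pos \ rootsSpannedBy rts Θ) :
    β ∘ₗ rootRefl α ∈ pos \ rootsSpannedBy rts Θ := by
  have hαspan : α ∈ Submodule.span ℝ (Θ : Set (𝔞 →ₗ[ℝ] ℝ)) := Submodule.subset_span hα
  have hβspan : β ∉ Submodule.span ℝ (Θ : Set (𝔞 →ₗ[ℝ] ℝ)) :=
    fun h => hβ.2 ⟨hRS.pos_subset hβ.1, h⟩
  refine ⟨hRS.comp_rootRefl_mem_pos (hΘ hα) hβ.1 fun h => hβspan ?_, fun h => hβspan ?_⟩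
  · exact Submodule.span_le.mpr (Set.singleton_subset_iff.mpr hαspan) h
  · have hβ_eq := comp_rootRefl α β
    rw [eq_sub_iff_add_eq] at hβ_eq
    exact hβ_eq ▸ add_mem h.2 (Submodule.smul_mem _ _ hαspan)

lemma comp_mem_pos_diff_of_mem_weylSubmonoid (hRS : IsRootSystemWithBase rts pos sim)
    (hΘ : Θ ⊆ sim) {w : Module.End ℝ 𝔞} (hw : w ∈ weylSubmonoid (Θ : Set (𝔞 →ₗ[ℝ] ℝ)))
    (hβ : β ∈ pos \ rootsSpannedBy rts Θ) : β ∘ₗ w ∈ pos \ rootsSpannedBy rts Θ := by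
  induction hw using Submonoid.closure_induction generalizing β with
  | mem _ hx =>
    obtain ⟨α, hα, rfl⟩ := hx
    exact hRS.comp_rootRefl_mem_pos_diff hΘ hα hβ
  | one => exact hβ
  | mul x y _ _ ihx ihy => exact ihy (ihx hβ)

lemma comp_rootRefl_mem_negSpannedPosRoots (hRS : IsRootSystemWithBase rts pos sim)
    (hΘ : Θ ⊆ sim) (hα : α ∈ Θ) (hαH : α H < 0)
    (hβ : β ∈ negSpannedPosRoots pos Θ (rootRefl α H)) :
    β ∘ₗ rootRefl α ∈ negSpannedPosRoots pos Θ H \ {α} := by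
  obtain ⟨hβpos, hβspan, hβneg⟩ := hβ
  have hαpos : α ∈ pos := hRS.sim_subset (hΘ hα)
  have hα0 : α ≠ 0 := hRS.ne_zero_of_mem_pos hαpos
  -- a positive multiple of `α` is positive at `s_α H`, since `α (s_α H) = -α H > 0`
  have hβα : β ∉ ℝ ∙ α := by
    intro hmem
    obtain ⟨t, rfl⟩ := Submodule.mem_span_singleton.mp hmem
    have ht := hRS.pos_of_smul_mem_pos (hΘ hα) hβpos
    have hsα : α (rootRefl α H) = -α H := LinearMap.congr_fun (comp_rootRefl_self hα0) H
    simp only [LinearMap.smul_apply, hsα, smul_eq_mul] at hβneg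
    nlinarith
  refine ⟨⟨hRS.comp_rootRefl_mem_pos (hΘ hα) hβpos hβα, ?_, hβneg⟩, fun h => ?_⟩
  · rw [comp_rootRefl]
    exact sub_mem hβspan (Submodule.smul_mem _ _ (Submodule.subset_span hα))
  · rw [Set.mem_singleton_iff, (involutive_comp_rootRefl hα0).eq_iff, comp_rootRefl_self hα0] at h
    exact hRS.neg_notMem_pos hαpos (h ▸ hβpos)

lemma ncard_negSpannedPosRoots_rootRefl_lt (hRS : IsRootSystemWithBase rts pos sim)
    (hΘ : Θ ⊆ sim) (hα : α ∈ Θ) (hαH : α H < 0) :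
    (negSpannedPosRoots pos Θ (rootRefl α H)).ncard < (negSpannedPosRoots pos Θ H).ncard := by
  have hα0 : α ≠ 0 := hRS.ne_zero_of_mem_pos (hRS.sim_subset (hΘ hα))
  have hfin : (negSpannedPosRoots pos Θ H).Finite :=
    hRS.finite.subset fun β hβ => hRS.pos_subset hβ.1
  calc (negSpannedPosRoots pos Θ (rootRefl α H)).ncard
      ≤ (negSpannedPosRoots pos Θ H \ {α}).ncard :=
        Set.ncard_le_ncard_of_injOn _
          (fun β hβ => hRS.comp_rootRefl_mem_negSpannedPosRoots hΘ hα hαH hβ)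
          (involutive_comp_rootRefl hα0).injective.injOn hfin.sdiff
    _ < (negSpannedPosRoots pos Θ H).ncard :=
        Set.ncard_sdiff_singleton_lt_of_mem
          ⟨hRS.sim_subset (hΘ hα), Submodule.subset_span hα, hαH⟩ hfin

lemma exists_mem_apply_neg_of_notMem_closure (hRS : IsRootSystemWithBase rts pos sim)
    (hΘ : Θ ⊆ sim) (hH : ∀ β ∈ pos \ rootsSpannedBy rts Θ, 0 ≤ β H)
    (hHc : H ∉ closure (weylChamber sim)) : ∃ α ∈ Θ, α H < 0 := by
  rw [closure_weylChamber hRS.linearIndepOn_sim, Set.mem_ofPred_eq] at hHc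
  push Not at hHc
  obtain ⟨α, hα, hαH⟩ := hHc
  refine ⟨α, ?_, hαH⟩
  by_contra hαΘ
  exact (hH α ⟨hRS.sim_subset hα, fun h => hRS.notMem_span_of_mem_sim hΘ hα hαΘ h.2⟩).not_gt hαH

lemma exists_mem_weylSubmonoid_mem_image_closure (hRS : IsRootSystemWithBase rts pos sim)
    (hΘ : Θ ⊆ sim) (hH : ∀ β ∈ pos \ rootsSpannedBy rts Θ, 0 ≤ β H) :
    ∃ w ∈ weylSubmonoid (Θ : Set (𝔞 →ₗ[ℝ] ℝ)), H ∈ w '' closure (weylChamber sim) := by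
  induction hn : (negSpannedPosRoots pos Θ H).ncard using Nat.strong_induction_on
    generalizing H with
  | _ n ih =>
  by_cases hHc : H ∈ closure (weylChamber sim)
  · exact ⟨1, one_mem _, H, hHc, rfl⟩
  obtain ⟨α, hα, hαH⟩ := hRS.exists_mem_apply_neg_of_notMem_closure hΘ hH hHc
  obtain ⟨w, hw, H₀, hH₀, hwH₀⟩ := ih _ (hn ▸ hRS.ncard_negSpannedPosRoots_rootRefl_lt hΘ hα hαH)
    (H := rootRefl α H) (fun β hβ => hH _ (hRS.comp_rootRefl_mem_pos_diff hΘ hα hβ)) rfl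
  refine ⟨rootRefl α * w, mul_mem (Submonoid.subset_closure ⟨α, hα, rfl⟩) hw, H₀, hH₀, ?_⟩
  rw [Module.End.mul_apply, hwH₀, ← Module.End.mul_apply,
    rootRefl_mul_self (hRS.ne_zero_of_mem_pos (hRS.sim_subset (hΘ hα))), Module.End.one_apply]

end IsRootSystemWithBase

/-- The set where all positive roots outside `⟨Θ⟩` are nonnegative is the union
of the images of the closed fundamental Weyl chamber under the elements of `W_Θ`. -/
theorem nonneg_cone_eq_weylSubmonoid_image (rts pos : Set (𝔞 →ₗ[ℝ] ℝ))
    (sim Θ : Finset (𝔞 →ₗ[ℝ] ℝ))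
    (hRS : IsRootSystemWithBase rts pos sim) (hΘ : Θ ⊆ sim) :
    {H : 𝔞 | ∀ α ∈ pos \ rootsSpannedBy rts Θ, 0 ≤ α H}
      = ⋃ w ∈ weylSubmonoid (↑Θ : Set (𝔞 →ₗ[ℝ] ℝ)), ⇑w '' closure (weylChamber sim) := by
  ext H
  simp only [Set.mem_ofPred_eq, Set.mem_iUnion, exists_prop]
  refine ⟨hRS.exists_mem_weylSubmonoid_mem_image_closure hΘ, ?_⟩
  rintro ⟨w, hw, H₀, hH₀, rfl⟩ β hβ
  rw [closure_weylChamber hRS.linearIndepOn_sim] at hH₀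
  exact hRS.apply_nonneg_of_mem_pos (β := β ∘ₗ w)
    (hRS.comp_mem_pos_diff_of_mem_weylSubmonoid hΘ hw hβ).1 hH₀

end
end
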